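/- Let C_a, C_t, N_a, s be positive reals, J a natural number, and l a real number with 1 ≤ l < (J+1)/2. Then the limit as x → ∞ of γ_x(l)/x^{2(l−1)} equals C_t·N_a/s, i.e., when the active IRS lies in the first half of the reflection path the received SNR scales as x^{2(l−1)} with coefficient C_t·N_a/s (equation (14), first case). -/

import Mathlib

/-! Dividing numerator and denominator by `x^{2(J-l)}` leaves the constant term `s·C_a` and two
powers of `x` whose exponents are negative exactly when `1 ≤ l < (J+1)/2`. -/

open Real Filter

/-- Received SNR `γ_x(l)` of the multi-IRS system, `l` being the index of the active IRS. -/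
noncomputable def snr (Ca Ct Na s : ℝ) (J : ℕ) (x l : ℝ) : ℝ :=
  Ca * Ct * Na * x ^ (2 * ((J : ℝ) - 1)) /
    (s * Ca * x ^ (2 * ((J : ℝ) - l)) + s * Ct * x ^ (2 * (l - 1)) + s ^ 2)

theorem tendsto_rpow_atTop_nhds_zero_of_neg {r : ℝ} (hr : r < 0) :
    Tendsto (fun x : ℝ => x ^ r) atTop (nhds 0) := by
  simpa using tendsto_rpow_neg_atTop (neg_pos.mpr hr)

theorem tendsto_div_add_rpow_add_rpow (a b c d : ℝ) {p q : ℝ} (hb : b ≠ 0) (hp : p < 0)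
    (hq : q < 0) :
    Tendsto (fun x : ℝ => a / (b + c * x ^ p + d * x ^ q)) atTop (nhds (a / b)) := by
  have hden : Tendsto (fun x : ℝ => b + c * x ^ p + d * x ^ q) atTop (nhds b) := by
    simpa using ((tendsto_rpow_atTop_nhds_zero_of_neg hp).const_mul c |>.const_add b).add
      ((tendsto_rpow_atTop_nhds_zero_of_neg hq).const_mul d)
  exact tendsto_const_nhds.div hden hb

-- Where the denominator of `snr` vanishes, both sides are `0` by the `x / 0 = 0` convention.
theorem snr_div_rpow_eq (Ca Ct Na s : ℝ) (J : ℕ) {x : ℝ} (hx : 0 < x) (l : ℝ) :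
    snr Ca Ct Na s J x l / x ^ (2 * (l - 1)) =
      Ca * Ct * Na /
        (s * Ca + s * Ct * x ^ (2 * (2 * l - 1 - J)) + s ^ 2 * x ^ (2 * (l - J))) := by
  rw [snr]
  set A := x ^ (2 * ((J : ℝ) - l))
  have hA : A ≠ 0 := (rpow_pos_of_pos hx _).ne'
  have hB : x ^ (2 * (l - 1)) ≠ 0 := (rpow_pos_of_pos hx _).ne'
  have hnum : x ^ (2 * ((J : ℝ) - 1)) = A * x ^ (2 * (l - 1)) := by
    rw [← rpow_add hx]; ring_nf
  have hmid : x ^ (2 * (2 * l - 1 - (J : ℝ))) = x ^ (2 * (l - 1)) / A := by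
    rw [← rpow_sub hx]; ring_nf
  have hlast : x ^ (2 * (l - (J : ℝ))) = A⁻¹ := by
    rw [← rpow_neg hx.le]; ring_nf
  have hden : s * Ca + s * Ct * (x ^ (2 * (l - 1)) / A) + s ^ 2 * A⁻¹ =
      (s * Ca * A + s * Ct * x ^ (2 * (l - 1)) + s ^ 2) / A := by
    field_simp
  rw [hnum, hmid, hlast, hden, div_div_eq_mul_div, div_right_comm, ← mul_assoc,
    mul_div_cancel_right₀ _ hB]

theorem stmt_9_general (Ca Ct Na s : ℝ) (hCa : 0 < Ca) (hs : 0 < s)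
    (J : ℕ) (l : ℝ) (hl1 : 1 ≤ l) (hl2 : l < ((J : ℝ) + 1) / 2) :
    Tendsto (fun x : ℝ => snr Ca Ct Na s J x l / x ^ (2 * (l - 1))) atTop
      (nhds (Ct * Na / s)) := by
  have hlim := tendsto_div_add_rpow_add_rpow (Ca * Ct * Na) (s * Ca) (s * Ct) (s ^ 2)
    (p := 2 * (2 * l - 1 - J)) (q := 2 * (l - J)) (by positivity) (by linarith) (by linarith)
  rw [show Ca * Ct * Na / (s * Ca) = Ct * Na / s by field_simp] at hlim
  refine hlim.congr' ?_
  filter_upwards [eventually_gt_atTop 0] with x hx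
  exact (snr_div_rpow_eq Ca Ct Na s J hx l).symm

/-- Equation (14), first case: if the AIRS lies in the first half of the path,
`1 ≤ l < (J+1)/2`, then as `x → ∞` the received SNR scales as `x^{2(l−1)}` with
coefficient `C_t·N_a/s`. -/
theorem stmt_9 (Ca Ct Na s : ℝ) (hCa : 0 < Ca) (hCt : 0 < Ct) (hNa : 0 < Na) (hs : 0 < s)
    (J : ℕ) (l : ℝ) (hl1 : 1 ≤ l) (hl2 : l < ((J : ℝ) + 1) / 2) :
    Tendsto (fun x : ℝ => snr Ca Ct Na s J x l / x ^ (2 * (l - 1))) atTop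
      (nhds (Ct * Na / s)) :=
  stmt_9_general Ca Ct Na s hCa hs J l hl1 hl2
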